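/- arXiv:2511.12775 — 2 statements merged into one kernel-verified Lean document; each statement's English description precedes it below -/
import Mathlib

section
/- Let V ⊆ ℝ² be open and let φ : V → ℝ be smooth with φ < 0 on V and satisfying Δφ + 8·φ/(1 + x² + y²)² = 0 on V. Then Δφ > 0 on V and φ satisfies Δφ/φ − (φ_x² + φ_y²)/(2φ²) − (1/2)·Δ(log Δφ) = 0 on V. -/
/-- First partial derivative in the `x` direction of a function on `ℝ²`. -/
noncomputable def px (f : ℝ × ℝ → ℝ) (p : ℝ × ℝ) : ℝ := fderiv ℝ f p (1, 0)

/-- First partial derivative in the `y` direction of a function on `ℝ²`. -/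
noncomputable def py (f : ℝ × ℝ → ℝ) (p : ℝ × ℝ) : ℝ := fderiv ℝ f p (0, 1)

/-- The Laplacian `Δf = f_xx + f_yy` of a function on `ℝ²`. -/
noncomputable def lap (f : ℝ × ℝ → ℝ) (p : ℝ × ℝ) : ℝ := px (px f) p + py (py f) p
lemma px_congr {f g : ℝ × ℝ → ℝ} {p : ℝ × ℝ} (h : f =ᶠ[nhds p] g) : px f p = px g p := by
  unfold px; rw [h.fderiv_eq]

lemma py_congr {f g : ℝ × ℝ → ℝ} {p : ℝ × ℝ} (h : f =ᶠ[nhds p] g) : py f p = py g p := by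
  unfold py; rw [h.fderiv_eq]

lemma lap_congr {V : Set (ℝ × ℝ)} (hV : IsOpen V) {f g : ℝ × ℝ → ℝ}
    (h : ∀ q ∈ V, f q = g q) {p : ℝ × ℝ} (hp : p ∈ V) : lap f p = lap g p := by
  have hx : ∀ q ∈ V, px f q = px g q := fun q hq =>
    px_congr (Filter.eventuallyEq_of_mem (hV.mem_nhds hq) h)
  have hy : ∀ q ∈ V, py f q = py g q := fun q hq =>
    py_congr (Filter.eventuallyEq_of_mem (hV.mem_nhds hq) h)
  unfold lap
  rw [px_congr (Filter.eventuallyEq_of_mem (hV.mem_nhds hp) hx),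
    py_congr (Filter.eventuallyEq_of_mem (hV.mem_nhds hp) hy)]

lemma fd_log {f : ℝ × ℝ → ℝ} {p : ℝ × ℝ} (hf : DifferentiableAt ℝ f p) (h0 : f p ≠ 0)
    (v : ℝ × ℝ) :
    fderiv ℝ (fun q => Real.log (f q)) p v = fderiv ℝ f p v / f p := by
  rw [(hf.hasFDerivAt.log h0).fderiv]
  simp [smul_eq_mul, div_eq_inv_mul]

lemma fd_div {f g : ℝ × ℝ → ℝ} {p : ℝ × ℝ} (hf : DifferentiableAt ℝ f p)
    (hg : DifferentiableAt ℝ g p) (h0 : g p ≠ 0) (v : ℝ × ℝ) :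
    fderiv ℝ (fun q => f q / g q) p v
      = (fderiv ℝ f p v * g p - f p * fderiv ℝ g p v) / g p ^ 2 := by
  have hinv : HasFDerivAt (fun q => (g q)⁻¹) ((-(g p ^ 2)⁻¹) • fderiv ℝ g p) p :=
    (hasDerivAt_inv h0).comp_hasFDerivAt p hg.hasFDerivAt
  have h := hf.hasFDerivAt.fun_mul hinv
  have hfun : (fun q => f q / g q) = fun q => f q * (g q)⁻¹ := by
    funext q; rw [div_eq_mul_inv]
  rw [hfun, h.fderiv]
  simp only [ContinuousLinearMap.add_apply, ContinuousLinearMap.smul_apply, smul_eq_mul]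
  field_simp
  ring

lemma contDiffAt_fd {V : Set (ℝ × ℝ)} (hV : IsOpen V) {f : ℝ × ℝ → ℝ}
    (hf : ContDiffOn ℝ (⊤ : ℕ∞) f V) {p : ℝ × ℝ} (hp : p ∈ V) (v : ℝ × ℝ) :
    ContDiffAt ℝ (⊤ : ℕ∞) (fun q => fderiv ℝ f q v) p := by
  have h1 : ContDiffAt ℝ (⊤ : ℕ∞) f p := hf.contDiffAt (hV.mem_nhds hp)
  have h2 : ContDiffAt ℝ (⊤ : ℕ∞) (fderiv ℝ f) p := h1.fderiv_right (by simp)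
  exact ContDiff.comp_contDiffAt p (ContinuousLinearMap.apply ℝ ℝ v).contDiff h2
lemma diff_px {V : Set (ℝ × ℝ)} (hV : IsOpen V) {f : ℝ × ℝ → ℝ}
    (hf : ContDiffOn ℝ (⊤ : ℕ∞) f V) {p : ℝ × ℝ} (hp : p ∈ V) :
    DifferentiableAt ℝ (px f) p :=
  (contDiffAt_fd hV hf hp (1, 0)).differentiableAt (by simp)

lemma diff_py {V : Set (ℝ × ℝ)} (hV : IsOpen V) {f : ℝ × ℝ → ℝ}
    (hf : ContDiffOn ℝ (⊤ : ℕ∞) f V) {p : ℝ × ℝ} (hp : p ∈ V) :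
    DifferentiableAt ℝ (py f) p :=
  (contDiffAt_fd hV hf hp (0, 1)).differentiableAt (by simp)

lemma lap_log {V : Set (ℝ × ℝ)} (hV : IsOpen V) {f : ℝ × ℝ → ℝ}
    (hf : ContDiffOn ℝ (⊤ : ℕ∞) f V) (h0 : ∀ q ∈ V, f q ≠ 0) {p : ℝ × ℝ} (hp : p ∈ V) :
    lap (fun q => Real.log (f q)) p
      = lap f p / f p - (px f p ^ 2 + py f p ^ 2) / f p ^ 2 := by
  have hdiff : ∀ q ∈ V, DifferentiableAt ℝ f q := fun q hq =>
    (hf.contDiffAt (hV.mem_nhds hq)).differentiableAt (by simp)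
  have hx : ∀ q ∈ V, px (fun z => Real.log (f z)) q = px f q / f q := fun q hq =>
    fd_log (hdiff q hq) (h0 q hq) (1, 0)
  have hy : ∀ q ∈ V, py (fun z => Real.log (f z)) q = py f q / f q := fun q hq =>
    fd_log (hdiff q hq) (h0 q hq) (0, 1)
  have hxx : px (px (fun z => Real.log (f z))) p = px (fun q => px f q / f q) p :=
    px_congr (Filter.eventuallyEq_of_mem (hV.mem_nhds hp) hx)
  have hyy : py (py (fun z => Real.log (f z))) p = py (fun q => py f q / f q) p :=
    py_congr (Filter.eventuallyEq_of_mem (hV.mem_nhds hp) hy)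
  have hxx2 : px (fun q => px f q / f q) p
      = (px (px f) p * f p - px f p * px f p) / f p ^ 2 :=
    fd_div (diff_px hV hf hp) (hdiff p hp) (h0 p hp) (1, 0)
  have hyy2 : py (fun q => py f q / f q) p
      = (py (py f) p * f p - py f p * py f p) / f p ^ 2 :=
    fd_div (diff_py hV hf hp) (hdiff p hp) (h0 p hp) (0, 1)
  unfold lap
  rw [hxx, hyy, hxx2, hyy2]
  have h0p := h0 p hp
  field_simp
  ring

lemma lap_sub {V : Set (ℝ × ℝ)} (hV : IsOpen V) {f g : ℝ × ℝ → ℝ}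
    (hf : ContDiffOn ℝ (⊤ : ℕ∞) f V) (hg : ContDiffOn ℝ (⊤ : ℕ∞) g V) {p : ℝ × ℝ}
    (hp : p ∈ V) :
    lap (fun q => f q - g q) p = lap f p - lap g p := by
  have hdf : ∀ q ∈ V, DifferentiableAt ℝ f q := fun q hq =>
    (hf.contDiffAt (hV.mem_nhds hq)).differentiableAt (by simp)
  have hdg : ∀ q ∈ V, DifferentiableAt ℝ g q := fun q hq =>
    (hg.contDiffAt (hV.mem_nhds hq)).differentiableAt (by simp)
  have hx : ∀ q ∈ V, px (fun z => f z - g z) q = px f q - px g q := fun q hq => by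
    simp [px, fderiv_fun_sub (hdf q hq) (hdg q hq)]
  have hy : ∀ q ∈ V, py (fun z => f z - g z) q = py f q - py g q := fun q hq => by
    simp [py, fderiv_fun_sub (hdf q hq) (hdg q hq)]
  have hxx : px (px (fun z => f z - g z)) p = px (fun q => px f q - px g q) p :=
    px_congr (Filter.eventuallyEq_of_mem (hV.mem_nhds hp) hx)
  have hyy : py (py (fun z => f z - g z)) p = py (fun q => py f q - py g q) p :=
    py_congr (Filter.eventuallyEq_of_mem (hV.mem_nhds hp) hy)
  have hxx2 : px (fun q => px f q - px g q) p = px (px f) p - px (px g) p := by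
    show (fderiv ℝ (fun q => px f q - px g q) p) (1, 0) = _
    rw [fderiv_fun_sub (diff_px hV hf hp) (diff_px hV hg hp)]
    rfl
  have hyy2 : py (fun q => py f q - py g q) p = py (py f) p - py (py g) p := by
    show (fderiv ℝ (fun q => py f q - py g q) p) (0, 1) = _
    rw [fderiv_fun_sub (diff_py hV hf hp) (diff_py hV hg hp)]
    rfl
  unfold lap
  rw [hxx, hyy, hxx2, hyy2]
  ring

lemma lap_const_add (c : ℝ) (f : ℝ × ℝ → ℝ) (p : ℝ × ℝ) :
    lap (fun q => c + f q) p = lap f p := by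
  have hx : ∀ q, px (fun z => c + f z) q = px f q := fun q => by
    simp [px, fderiv_const_add]
  have hy : ∀ q, py (fun z => c + f z) q = py f q := fun q => by
    simp [py, fderiv_const_add]
  unfold lap
  rw [px_congr (Filter.Eventually.of_forall hx), py_congr (Filter.Eventually.of_forall hy)]
lemma hasfd_w (q : ℝ × ℝ) : HasFDerivAt (fun z : ℝ × ℝ => 1 + z.1 ^ 2 + z.2 ^ 2)
    ((2 * q.1) • ContinuousLinearMap.fst ℝ ℝ ℝ + (2 * q.2) • ContinuousLinearMap.snd ℝ ℝ ℝ)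
    q := by
  have h1 : HasFDerivAt (fun z : ℝ × ℝ => z.1) (ContinuousLinearMap.fst ℝ ℝ ℝ) q :=
    hasFDerivAt_fst
  have h2 : HasFDerivAt (fun z : ℝ × ℝ => z.2) (ContinuousLinearMap.snd ℝ ℝ ℝ) q :=
    hasFDerivAt_snd
  have h := ((h1.fun_mul h1).const_add 1).fun_add (h2.fun_mul h2)
  refine (congrArg₂ (fun F L => HasFDerivAt F L q) ?_ ?_).mpr h
  · funext z; ring
  · apply ContinuousLinearMap.ext; intro v
    simp only [ContinuousLinearMap.add_apply, ContinuousLinearMap.smul_apply, smul_eq_mul]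
    ring

lemma hasfd_u2 (q : ℝ × ℝ) : HasFDerivAt (fun z : ℝ × ℝ => (1 + z.1 ^ 2 + z.2 ^ 2) ^ 2)
    ((2 * (1 + q.1 ^ 2 + q.2 ^ 2)) •
      ((2 * q.1) • ContinuousLinearMap.fst ℝ ℝ ℝ + (2 * q.2) • ContinuousLinearMap.snd ℝ ℝ ℝ))
    q := by
  have h := (hasfd_w q).fun_mul (hasfd_w q)
  refine (congrArg₂ (fun F L => HasFDerivAt F L q) ?_ ?_).mpr h
  · funext z; ring
  · apply ContinuousLinearMap.ext; intro v
    simp only [ContinuousLinearMap.add_apply, ContinuousLinearMap.smul_apply, smul_eq_mul]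
    ring

lemma px_u2 (q : ℝ × ℝ) : px (fun z : ℝ × ℝ => (1 + z.1 ^ 2 + z.2 ^ 2) ^ 2) q
    = 4 * q.1 * (1 + q.1 ^ 2 + q.2 ^ 2) := by
  rw [px, (hasfd_u2 q).fderiv]
  simp only [ContinuousLinearMap.add_apply, ContinuousLinearMap.smul_apply, smul_eq_mul,
    ContinuousLinearMap.coe_fst', ContinuousLinearMap.coe_snd']
  ring

lemma py_u2 (q : ℝ × ℝ) : py (fun z : ℝ × ℝ => (1 + z.1 ^ 2 + z.2 ^ 2) ^ 2) q
    = 4 * q.2 * (1 + q.1 ^ 2 + q.2 ^ 2) := by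
  rw [py, (hasfd_u2 q).fderiv]
  simp only [ContinuousLinearMap.add_apply, ContinuousLinearMap.smul_apply, smul_eq_mul,
    ContinuousLinearMap.coe_fst', ContinuousLinearMap.coe_snd']
  ring

lemma lap_u2 (p : ℝ × ℝ) : lap (fun z : ℝ × ℝ => (1 + z.1 ^ 2 + z.2 ^ 2) ^ 2) p
    = 16 * (1 + p.1 ^ 2 + p.2 ^ 2) - 8 := by
  have hgx : ∀ q : ℝ × ℝ, HasFDerivAt (fun z : ℝ × ℝ => 4 * z.1 * (1 + z.1 ^ 2 + z.2 ^ 2))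
      ((4 * q.1) • ((2 * q.1) • ContinuousLinearMap.fst ℝ ℝ ℝ
          + (2 * q.2) • ContinuousLinearMap.snd ℝ ℝ ℝ)
        + (1 + q.1 ^ 2 + q.2 ^ 2) • ((4:ℝ) • ContinuousLinearMap.fst ℝ ℝ ℝ)) q := by
    intro q
    exact ((hasFDerivAt_fst.const_mul 4).mul (hasfd_w q))
  have hgy : ∀ q : ℝ × ℝ, HasFDerivAt (fun z : ℝ × ℝ => 4 * z.2 * (1 + z.1 ^ 2 + z.2 ^ 2))
      ((4 * q.2) • ((2 * q.1) • ContinuousLinearMap.fst ℝ ℝ ℝ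
          + (2 * q.2) • ContinuousLinearMap.snd ℝ ℝ ℝ)
        + (1 + q.1 ^ 2 + q.2 ^ 2) • ((4:ℝ) • ContinuousLinearMap.snd ℝ ℝ ℝ)) q := by
    intro q
    exact ((hasFDerivAt_snd.const_mul 4).mul (hasfd_w q))
  have hx : px (px (fun z : ℝ × ℝ => (1 + z.1 ^ 2 + z.2 ^ 2) ^ 2)) p
      = px (fun z : ℝ × ℝ => 4 * z.1 * (1 + z.1 ^ 2 + z.2 ^ 2)) p :=
    px_congr (Filter.Eventually.of_forall px_u2)
  have hy : py (py (fun z : ℝ × ℝ => (1 + z.1 ^ 2 + z.2 ^ 2) ^ 2)) p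
      = py (fun z : ℝ × ℝ => 4 * z.2 * (1 + z.1 ^ 2 + z.2 ^ 2)) p :=
    py_congr (Filter.Eventually.of_forall py_u2)
  unfold lap
  rw [hx, hy, px, py, (hgx p).fderiv, (hgy p).fderiv]
  simp only [ContinuousLinearMap.add_apply, ContinuousLinearMap.smul_apply, smul_eq_mul,
    ContinuousLinearMap.coe_fst', ContinuousLinearMap.coe_snd']
  ring
/-- negative smooth solutions of `Δφ + 8φ/(1 + x² + y²)² = 0` have `Δφ > 0` and
satisfy the Ricci flat constraint (con111***) of the enlarged Kerr family. -/
theorem stmt_9 (V : Set (ℝ × ℝ)) (hV : IsOpen V)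
    (φ : ℝ × ℝ → ℝ) (hφ : ContDiffOn ℝ (⊤ : ℕ∞) φ V)
    (hφneg : ∀ p ∈ V, φ p < 0)
    (heq : ∀ p ∈ V, lap φ p + 8 * φ p / (1 + p.1 ^ 2 + p.2 ^ 2) ^ 2 = 0) :
    (∀ p ∈ V, 0 < lap φ p) ∧
    (∀ p ∈ V,
      lap φ p / φ p - (px φ p ^ 2 + py φ p ^ 2) / (2 * φ p ^ 2)
        - (1 / 2) * lap (fun q => Real.log (lap φ q)) p = 0) := by
  have hwpos : ∀ q : ℝ × ℝ, 0 < 1 + q.1 ^ 2 + q.2 ^ 2 := fun q => by positivity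
  have hu2pos : ∀ q : ℝ × ℝ, 0 < (1 + q.1 ^ 2 + q.2 ^ 2) ^ 2 := fun q => by positivity
  have hφ0 : ∀ q ∈ V, φ q ≠ 0 := fun q hq => ne_of_lt (hφneg q hq)
  have hlapφ : ∀ q ∈ V, lap φ q = (-8) * φ q / (1 + q.1 ^ 2 + q.2 ^ 2) ^ 2 := by
    intro q hq
    have h := heq q hq
    have h2 : lap φ q = -(8 * φ q / (1 + q.1 ^ 2 + q.2 ^ 2) ^ 2) := by linarith
    rw [h2]; ring
  have part1 : ∀ p ∈ V, 0 < lap φ p := by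
    intro p hp
    rw [hlapφ p hp]
    have h1 : 0 < (-8) * φ p := by nlinarith [hφneg p hp]
    exact div_pos h1 (hu2pos p)
  refine ⟨part1, fun p hp => ?_⟩
  have hu2smooth : ContDiff ℝ (⊤ : ℕ∞) (fun z : ℝ × ℝ => (1 + z.1 ^ 2 + z.2 ^ 2) ^ 2) := by
    fun_prop
  have hu2on : ContDiffOn ℝ (⊤ : ℕ∞) (fun z : ℝ × ℝ => (1 + z.1 ^ 2 + z.2 ^ 2) ^ 2) V :=
    hu2smooth.contDiffOn
  have hu2ne : ∀ q ∈ V, (1 + q.1 ^ 2 + q.2 ^ 2) ^ 2 ≠ 0 := fun q _ => (hu2pos q).ne'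
  have hlog : ∀ q ∈ V, Real.log (lap φ q)
      = Real.log (-8) + (Real.log (φ q) - Real.log ((1 + q.1 ^ 2 + q.2 ^ 2) ^ 2)) := by
    intro q hq
    rw [hlapφ q hq, Real.log_div (mul_ne_zero (by norm_num) (hφ0 q hq)) (hu2pos q).ne',
      Real.log_mul (by norm_num) (hφ0 q hq)]
    ring
  have key : lap (fun q => Real.log (lap φ q)) p
      = lap (fun q => Real.log (φ q)) p
        - lap (fun q => Real.log ((1 + q.1 ^ 2 + q.2 ^ 2) ^ 2)) p := by
    rw [lap_congr hV hlog hp, lap_const_add]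
    exact lap_sub hV (hφ.log hφ0) (hu2on.log hu2ne) hp
  have h1 : lap (fun q => Real.log (φ q)) p
      = lap φ p / φ p - (px φ p ^ 2 + py φ p ^ 2) / φ p ^ 2 := lap_log hV hφ hφ0 hp
  have h2 : lap (fun q => Real.log ((1 + q.1 ^ 2 + q.2 ^ 2) ^ 2)) p
      = 8 / (1 + p.1 ^ 2 + p.2 ^ 2) ^ 2 := by
    rw [lap_log hV hu2on hu2ne hp, lap_u2, px_u2, py_u2]
    have hne := (hwpos p).ne'
    field_simp
    ring
  rw [key, h1, h2, hlapφ p hp]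
  have hne := (hwpos p).ne'
  have hφp := hφ0 p hp
  field_simp
  ring
end

section
/- Let V ⊆ {(x,y) ∈ ℝ² : x² + y² < 1} be open and let φ : V → ℝ be smooth with φ > 0 on V and satisfying Δφ − 8·φ/(1 − x² − y²)² = 0 on V. Then Δφ > 0 on V and φ satisfies Δφ/φ − (φ_x² + φ_y²)/(2φ²) − (1/2)·Δ(log Δφ) = 0 on V. -/
section helpers
variable {f g : ℝ × ℝ → ℝ} {p v : ℝ × ℝ}

lemma pd_log (hf : DifferentiableAt ℝ f p) (h0 : f p ≠ 0) (v : ℝ × ℝ) :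
    fderiv ℝ (fun q => Real.log (f q)) p v = fderiv ℝ f p v / f p := by
  have h : HasFDerivAt (fun q => Real.log (f q)) ((f p)⁻¹ • fderiv ℝ f p) p :=
    (Real.hasDerivAt_log h0).comp_hasFDerivAt p hf.hasFDerivAt
  rw [h.fderiv]
  simp [div_eq_inv_mul]

lemma pd_inv (hf : DifferentiableAt ℝ f p) (h0 : f p ≠ 0) (v : ℝ × ℝ) :
    fderiv ℝ (fun q => (f q)⁻¹) p v = -(fderiv ℝ f p v) / f p ^ 2 := by
  have h : HasFDerivAt (fun q => (f q)⁻¹) (-(f p ^ 2)⁻¹ • fderiv ℝ f p) p :=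
    (hasDerivAt_inv h0).comp_hasFDerivAt p hf.hasFDerivAt
  rw [h.fderiv]
  simp [div_eq_inv_mul]

lemma pd_mul (hf : DifferentiableAt ℝ f p) (hg : DifferentiableAt ℝ g p) (v : ℝ × ℝ) :
    fderiv ℝ (fun q => f q * g q) p v
      = f p * fderiv ℝ g p v + g p * fderiv ℝ f p v := by
  rw [fderiv_fun_mul hf hg]; simp

lemma pd_add (hf : DifferentiableAt ℝ f p) (hg : DifferentiableAt ℝ g p) (v : ℝ × ℝ) :
    fderiv ℝ (fun q => f q + g q) p v = fderiv ℝ f p v + fderiv ℝ g p v := by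
  rw [fderiv_fun_add hf hg]; simp

lemma pd_sub (hf : DifferentiableAt ℝ f p) (hg : DifferentiableAt ℝ g p) (v : ℝ × ℝ) :
    fderiv ℝ (fun q => f q - g q) p v = fderiv ℝ f p v - fderiv ℝ g p v := by
  rw [fderiv_fun_sub hf hg]; simp

lemma pd_const (c : ℝ) (v : ℝ × ℝ) : fderiv ℝ (fun _ : ℝ × ℝ => c) p v = 0 := by
  simp [fderiv_const]

lemma pd_const_mul (hf : DifferentiableAt ℝ f p) (c : ℝ) (v : ℝ × ℝ) :
    fderiv ℝ (fun q => c * f q) p v = c * fderiv ℝ f p v := by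
  rw [fderiv_const_mul hf]; simp

lemma pd_fst (v : ℝ × ℝ) : fderiv ℝ (fun q : ℝ × ℝ => q.1) p v = v.1 := by
  rw [(hasFDerivAt_fst (𝕜 := ℝ) (p := p)).fderiv]; rfl

lemma pd_snd (v : ℝ × ℝ) : fderiv ℝ (fun q : ℝ × ℝ => q.2) p v = v.2 := by
  rw [(hasFDerivAt_snd (𝕜 := ℝ) (p := p)).fderiv]; rfl

lemma pd_congr (hfg : f =ᶠ[nhds p] g) (v : ℝ × ℝ) :
    fderiv ℝ f p v = fderiv ℝ g p v := by rw [hfg.fderiv_eq]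

end helpers

lemma diff_pd {V : Set (ℝ × ℝ)} (hV : IsOpen V) {φ : ℝ × ℝ → ℝ}
    (hφ : ContDiffOn ℝ (⊤ : ℕ∞) φ V) (v : ℝ × ℝ) {q : ℝ × ℝ} (hq : q ∈ V) :
    DifferentiableAt ℝ (fun r => fderiv ℝ φ r v) q := by
  have h1 : ContDiffOn ℝ (⊤ : ℕ∞) (fderiv ℝ φ) V :=
    ((contDiffOn_infty_iff_fderiv_of_isOpen hV).1 hφ).2
  have h2 : DifferentiableAt ℝ (fderiv ℝ φ) q :=
    (h1.contDiffAt (hV.mem_nhds hq)).differentiableAt (by simp)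
  exact (ContinuousLinearMap.apply ℝ ℝ v).differentiableAt.comp q h2

/-- positive smooth solutions of `Δφ − 8φ/(1 − x² − y²)² = 0` on an open subset of
the unit disc have `Δφ > 0` and satisfy the Ricci flat constraint (con111***) of the enlarged
Kerr family. -/
theorem stmt_10 (V : Set (ℝ × ℝ)) (hV : IsOpen V)
    (hVD : V ⊆ {p : ℝ × ℝ | p.1 ^ 2 + p.2 ^ 2 < 1})
    (φ : ℝ × ℝ → ℝ) (hφ : ContDiffOn ℝ (⊤ : ℕ∞) φ V)
    (hφpos : ∀ p ∈ V, 0 < φ p)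
    (heq : ∀ p ∈ V, lap φ p - 8 * φ p / (1 - p.1 ^ 2 - p.2 ^ 2) ^ 2 = 0) :
    (∀ p ∈ V, 0 < lap φ p) ∧
    (∀ p ∈ V,
      lap φ p / φ p - (px φ p ^ 2 + py φ p ^ 2) / (2 * φ p ^ 2)
        - (1 / 2) * lap (fun q => Real.log (lap φ q)) p = 0) := by
  have hwpos : ∀ p ∈ V, 0 < 1 - p.1 ^ 2 - p.2 ^ 2 := by
    intro p hp; have := hVD hp; simp only [Set.mem_setOf_eq] at this; linarith
  have hlap : ∀ p ∈ V, lap φ p = 8 * φ p / (1 - p.1 ^ 2 - p.2 ^ 2) ^ 2 := by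
    intro p hp; have := heq p hp; linarith
  have part1 : ∀ p ∈ V, 0 < lap φ p := by
    intro p hp; rw [hlap p hp]
    exact div_pos (by linarith [hφpos p hp]) (pow_pos (hwpos p hp) 2)
  refine ⟨part1, ?_⟩
  intro p hp
  set w : ℝ × ℝ → ℝ := fun q => 1 - q.1 ^ 2 - q.2 ^ 2 with hwdef
  have hwd : ∀ q : ℝ × ℝ, DifferentiableAt ℝ w q := by
    intro q; simp only [hwdef]; fun_prop
  have hpdw : ∀ q v : ℝ × ℝ, fderiv ℝ w q v = -(2 * q.1 * v.1) - 2 * q.2 * v.2 := by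
    intro q v
    have h1 : w = fun q : ℝ × ℝ => (1 - q.1 * q.1) - q.2 * q.2 := by
      funext r; simp only [hwdef]; ring
    rw [h1, pd_sub (by fun_prop) (by fun_prop), pd_sub (by fun_prop) (by fun_prop),
      pd_const, pd_mul (by fun_prop) (by fun_prop), pd_mul (by fun_prop) (by fun_prop),
      pd_fst, pd_snd]
    ring
  have hφd : ∀ q ∈ V, DifferentiableAt ℝ φ q := fun q hq =>
    (hφ.contDiffAt (hV.mem_nhds hq)).differentiableAt (by simp)
  have hφne : ∀ q ∈ V, φ q ≠ 0 := fun q hq => ne_of_gt (hφpos q hq)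
  have hwne : ∀ q ∈ V, w q ≠ 0 := fun q hq => ne_of_gt (hwpos q hq)
  have hGeq : ∀ q ∈ V, Real.log (lap φ q)
      = Real.log 8 + Real.log (φ q) - 2 * Real.log (w q) := by
    intro q hq
    have h8 : (8 : ℝ) * φ q ≠ 0 := ne_of_gt (by linarith [hφpos q hq])
    rw [hlap q hq, Real.log_div h8 (pow_ne_zero 2 (hwne q hq)),
      Real.log_mul (by norm_num) (hφne q hq), Real.log_pow]
    push_cast; ring
  have key1 : ∀ v : ℝ × ℝ, ∀ q ∈ V,
      fderiv ℝ (fun r => Real.log (lap φ r)) q v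
        = fderiv ℝ φ q v * (φ q)⁻¹ + (4 * v.1 * q.1 + 4 * v.2 * q.2) * (w q)⁻¹ := by
    intro v q hq
    have hev : (fun r => Real.log (lap φ r))
        =ᶠ[nhds q] (fun r => Real.log 8 + Real.log (φ r) - 2 * Real.log (w r)) :=
      Filter.eventuallyEq_of_mem (hV.mem_nhds hq) (fun r hr => hGeq r hr)
    rw [pd_congr hev,
      pd_sub ((differentiableAt_const _).fun_add ((hφd q hq).log (hφne q hq)))
        (((hwd q).log (hwne q hq)).const_mul 2),
      pd_add (differentiableAt_const _) ((hφd q hq).log (hφne q hq)),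
      pd_const, pd_const_mul ((hwd q).log (hwne q hq)),
      pd_log (hφd q hq) (hφne q hq), pd_log (hwd q) (hwne q hq), hpdw]
    field_simp
    ring
  have key2 : ∀ v : ℝ × ℝ,
      fderiv ℝ (fun r => fderiv ℝ (fun s => Real.log (lap φ s)) r v) p v
        = fderiv ℝ (fun r => fderiv ℝ φ r v) p v / φ p
          - (fderiv ℝ φ p v) ^ 2 / φ p ^ 2
          + 4 * (v.1 ^ 2 + v.2 ^ 2) / w p
          - (4 * v.1 * p.1 + 4 * v.2 * p.2) * fderiv ℝ w p v / w p ^ 2 := by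
    intro v
    have hev : (fun r => fderiv ℝ (fun s => Real.log (lap φ s)) r v)
        =ᶠ[nhds p] (fun r => fderiv ℝ φ r v * (φ r)⁻¹
          + (4 * v.1 * r.1 + 4 * v.2 * r.2) * (w r)⁻¹) :=
      Filter.eventuallyEq_of_mem (hV.mem_nhds hp) (fun r hr => key1 v r hr)
    have hlin : DifferentiableAt ℝ (fun r : ℝ × ℝ => 4 * v.1 * r.1 + 4 * v.2 * r.2) p := by
      fun_prop
    rw [pd_congr hev,
      pd_add ((diff_pd hV hφ v hp).fun_mul ((hφd p hp).fun_inv (hφne p hp)))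
        (hlin.fun_mul ((hwd p).fun_inv (hwne p hp))),
      pd_mul (diff_pd hV hφ v hp) ((hφd p hp).fun_inv (hφne p hp)),
      pd_inv (hφd p hp) (hφne p hp),
      pd_mul hlin ((hwd p).fun_inv (hwne p hp)),
      pd_inv (hwd p) (hwne p hp),
      pd_add (by fun_prop) (by fun_prop),
      pd_const_mul (by fun_prop), pd_const_mul (by fun_prop), pd_fst, pd_snd]
    have hφp := hφne p hp
    have hwp := hwne p hp
    field_simp
    ring
  have hL : lap (fun q => Real.log (lap φ q)) p
      = lap φ p / φ p - (px φ p ^ 2 + py φ p ^ 2) / φ p ^ 2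
        + 8 / (1 - p.1 ^ 2 - p.2 ^ 2)
        + (8 * p.1 ^ 2 + 8 * p.2 ^ 2) / (1 - p.1 ^ 2 - p.2 ^ 2) ^ 2 := by
    have e : lap (fun q => Real.log (lap φ q)) p
        = fderiv ℝ (fun r => fderiv ℝ (fun s => Real.log (lap φ s)) r ((1:ℝ), (0:ℝ))) p (1, 0)
          + fderiv ℝ (fun r => fderiv ℝ (fun s => Real.log (lap φ s)) r ((0:ℝ), (1:ℝ))) p (0, 1) := rfl
    rw [e, key2 ((1:ℝ), (0:ℝ)), key2 ((0:ℝ), (1:ℝ)), hpdw, hpdw,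
      show lap φ p = fderiv ℝ (fun r => fderiv ℝ φ r ((1:ℝ), (0:ℝ))) p (1, 0)
        + fderiv ℝ (fun r => fderiv ℝ φ r ((0:ℝ), (1:ℝ))) p (0, 1) from rfl,
      show px φ p = fderiv ℝ φ p ((1:ℝ), (0:ℝ)) from rfl,
      show py φ p = fderiv ℝ φ p ((0:ℝ), (1:ℝ)) from rfl]
    simp only [hwdef]
    norm_num
    have h2 : (1 - p.1 ^ 2 - p.2 ^ 2) ≠ 0 := hwne p hp
    field_simp
    ring
  rw [hL, hlap p hp]
  have h1 := hφne p hp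
  have h2 : (1 - p.1 ^ 2 - p.2 ^ 2) ≠ 0 := hwne p hp
  field_simp
  ring
end
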